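/- arXiv:1904.06303 — 6 statements merged into one kernel-verified Lean document; each statement's English description precedes it below -/
import Mathlib

section
/- Let n ≥ 1. Let z, z' ∈ {0,1}^{n−1} be bitstrings and let h_z, h_{z'} ∈ {0,1}. Consider the (n+1)-qubit vector |ψ⟩ = |h_z⟩ ⊗ |z⟩ ⊗ |0⟩ + |h_{z'}⟩ ⊗ |z'⟩ ⊗ |1⟩ (the first qubit is the output register, the remaining n qubits encode the preimages x = (z,0) and x' = (z',1)). For any b = (b_1,…,b_n) ∈ {0,1}^n, let |out⟩ be the single-qubit vector obtained from |ψ⟩ by applying, to each of the last n qubits, the functional (⟨0| + (−1)^{b_i}⟨1|)/√2. Then, whenever |out⟩ ≠ 0, there is a nonzero complex scalar c such that |out⟩ = c · X^{h_z} Z^{b_n + Σ_{i=1}^{n−1}(z_i + z'_i)·b_i} H^{h_z + h_{z'}} |0⟩, where all exponents are taken mod 2. (This is the correctness statement of the Malicious 4-states QFactory protocol: the output is the BB84 state H^{B_1}X^{B_2}|0⟩ with basis bit B_1 = h_z ⊕ h_{z'}.) -/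
/-!
Measuring the last `n` qubits of `|ψ⟩` keeps both branches, weighted by `2^(-n/2)` and the Walsh
signs `(-1)^(b·x)`, `(-1)^(b·x')`, whose ratio is `(-1)^(b·(x ⊕ x')) = (-1)^e` with `e` the
exponent of `Z`; so `|out⟩` is proportional to `|h_z⟩ + (-1)^e |h_z'⟩`. If `h_z ≠ h_z'` this is
`√2 · X^(h_z) Z^e H|0⟩`; if `h_z = h_z'` it is `(1 + (-1)^e) · X^(h_z) Z^e |0⟩`, nonzero exactly
when `e` is even.
-/

/- Qubits are indexed by `Bool` (|0⟩ ↔ false, |1⟩ ↔ true). With n = m + 1, the bitstrings z, z'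
   have length m and there are m + 2 qubits. -/

namespace QFactory4

noncomputable def Xg : Matrix Bool Bool ℂ := Matrix.of fun i j => if i = j then 0 else 1

noncomputable def Zg : Matrix Bool Bool ℂ :=
  Matrix.of fun i j => if i = j then (if i then -1 else 1) else 0

noncomputable def Hg : Matrix Bool Bool ℂ :=
  ((Real.sqrt 2 : ℂ))⁻¹ • Matrix.of fun i j => if i && j then (-1 : ℂ) else 1

def ket0 : Bool → ℂ := fun i => if i then 0 else 1

open Finset

lemma sum_mul_ite_cons_eq {α R : Type*} [Fintype α] [DecidableEq α] [NonAssocSemiring R] {k : ℕ}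
    (f : (Fin k → α) → R) (a h : α) (x : Fin k → α) :
    ∑ v, f v * (if (Fin.cons a v : Fin (k + 1) → α) = Fin.cons h x then 1 else 0) =
      if a = h then f x else 0 := by
  by_cases ha : a = h <;> simp [ha, Fin.cons_inj]

lemma sqrt_two_ne_zero : (Real.sqrt 2 : ℂ) ≠ 0 := by simp

lemma Zg_pow (e : ℕ) : Zg ^ e = Matrix.diagonal fun a => if a then (-1) ^ e else 1 := by
  have hZ : Zg = Matrix.diagonal fun a => if a then -1 else 1 := by
    ext i j; cases i <;> cases j <;> rfl
  rw [hZ, Matrix.diagonal_pow]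
  congr 1; funext a; cases a <;> simp

lemma XZH_mulVec_ket0 (hz hz' : Bool) (e : ℕ) :
    (Xg ^ hz.toNat * Zg ^ e * Hg ^ ((hz.toNat + hz'.toNat) % 2)).mulVec ket0 =
      if hz = hz' then Pi.single hz 1
      else (Real.sqrt 2 : ℂ)⁻¹ • (Pi.single hz 1 + (-1 : ℂ) ^ e • Pi.single hz' 1) := by
  cases hz <;> cases hz' <;> funext a <;> cases a <;>
    simp [Zg_pow, Xg, Hg, ket0, Matrix.mulVec, dotProduct, Matrix.mul_apply, mul_comm]

lemma exists_smul_XZH_mulVec_ket0 (hz hz' : Bool) (e : ℕ)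
    (hu : (Pi.single hz 1 + (-1 : ℂ) ^ e • Pi.single hz' 1 : Bool → ℂ) ≠ 0) :
    ∃ c : ℂ, c ≠ 0 ∧ (Pi.single hz 1 + (-1 : ℂ) ^ e • Pi.single hz' 1 : Bool → ℂ) =
      c • (Xg ^ hz.toNat * Zg ^ e * Hg ^ ((hz.toNat + hz'.toNat) % 2)).mulVec ket0 := by
  rw [XZH_mulVec_ket0]
  split_ifs with h
  · subst h
    have hu_eq : (Pi.single hz 1 + (-1 : ℂ) ^ e • Pi.single hz 1 : Bool → ℂ) =
        (1 + (-1 : ℂ) ^ e) • Pi.single hz 1 := by rw [add_smul, one_smul]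
    refine ⟨1 + (-1 : ℂ) ^ e, fun hc => hu ?_, hu_eq⟩
    rw [hu_eq, hc, zero_smul]
  · refine ⟨Real.sqrt 2, sqrt_two_ne_zero, ?_⟩
    rw [smul_smul, mul_inv_cancel₀ sqrt_two_ne_zero, one_smul]

def walsh {k : ℕ} (b v : Fin k → Bool) : ℂ := ∏ i, if b i && v i then -1 else 1

lemma walsh_mul_self {k : ℕ} (b v : Fin k → Bool) : walsh b v * walsh b v = 1 := by
  rw [walsh, ← prod_mul_distrib]
  exact prod_eq_one fun i _ => by split_ifs <;> norm_num

lemma walsh_ne_zero {k : ℕ} (b v : Fin k → Bool) : walsh b v ≠ 0 :=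
  left_ne_zero_of_mul_eq_one (walsh_mul_self b v)

lemma walsh_snoc {k : ℕ} (b : Fin (k + 1) → Bool) (v : Fin k → Bool) (l : Bool) :
    walsh b (Fin.snoc v l) =
      walsh (fun i => b i.castSucc) v * (if b (Fin.last k) && l then -1 else 1) := by
  simp [walsh, Fin.prod_univ_castSucc]

lemma walsh_mul_walsh {k : ℕ} (b v v' : Fin k → Bool) :
    walsh b v * walsh b v' = (-1) ^ ∑ i, ((v i).toNat + (v' i).toNat) * (b i).toNat := by
  rw [walsh, walsh, ← prod_mul_distrib, ← prod_pow_eq_pow_sum]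
  refine prod_congr rfl fun i _ => ?_
  cases b i <;> cases v i <;> cases v' i <;> norm_num

lemma prod_div_sqrt_two_eq_walsh {k : ℕ} (b v : Fin k → Bool) :
    ∏ i, ((if b i && v i then (-1 : ℂ) else 1) / (Real.sqrt 2 : ℂ)) =
      walsh b v / (Real.sqrt 2 : ℂ) ^ k := by
  rw [prod_div_distrib, prod_const, card_univ, Fintype.card_fin, walsh]

lemma walsh_snoc_true {m : ℕ} (b : Fin (m + 1) → Bool) (z z' : Fin m → Bool) :
    walsh b (Fin.snoc z' true) = walsh b (Fin.snoc z false) * (-1) ^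
      ((b (Fin.last m)).toNat + ∑ i, ((z i).toNat + (z' i).toNat) * (b i.castSucc).toNat) := by
  set x : Fin (m + 1) → Bool := Fin.snoc z false
  have h_prod : walsh b x * walsh b (Fin.snoc z' true) = (-1) ^
      ((b (Fin.last m)).toNat + ∑ i, ((z i).toNat + (z' i).toNat) * (b i.castSucc).toNat) := by
    rw [walsh_snoc, walsh_snoc, pow_add, ← walsh_mul_walsh]
    cases b (Fin.last m) <;> norm_num
  calc walsh b (Fin.snoc z' true)
      = (walsh b x * walsh b x) * walsh b (Fin.snoc z' true) := by rw [walsh_mul_self, one_mul]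
    _ = _ := by rw [mul_assoc, h_prod]

lemma measure_tail_two_branches_eq {k : ℕ} (b : Fin k → Bool) (hz hz' : Bool)
    (x x' : Fin k → Bool) :
    (fun a : Bool => ∑ v : Fin k → Bool,
        (∏ i, ((if b i && v i then (-1 : ℂ) else 1) / (Real.sqrt 2 : ℂ))) *
          ((if (Fin.cons a v : Fin (k + 1) → Bool) = Fin.cons hz x then 1 else 0) +
            (if (Fin.cons a v : Fin (k + 1) → Bool) = Fin.cons hz' x' then 1 else 0))) =
      ((Real.sqrt 2 : ℂ) ^ k)⁻¹ • (walsh b x • Pi.single hz 1 + walsh b x' • Pi.single hz' 1) := by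
  funext a
  simp only [mul_add, sum_add_distrib, sum_mul_ite_cons_eq, prod_div_sqrt_two_eq_walsh]
  simp only [Pi.smul_apply, Pi.add_apply, Pi.single_apply, smul_eq_mul]
  split_ifs <;> ring

theorem qfactory4_correctness (m : ℕ) (z z' : Fin m → Bool) (hz hz' : Bool)
    (b : Fin (m + 1) → Bool) :
    -- |ψ⟩ = |h_z⟩ ⊗ |z⟩ ⊗ |0⟩ + |h_{z'}⟩ ⊗ |z'⟩ ⊗ |1⟩, as a vector on m+2 qubits
    let ψ : (Fin (m + 2) → Bool) → ℂ := fun w =>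
      (if w = Fin.cons hz (Fin.snoc z false) then 1 else 0) +
      (if w = Fin.cons hz' (Fin.snoc z' true) then 1 else 0)
    -- apply (⟨0| + (−1)^{b_i}⟨1|)/√2 to each of the last m+1 qubits
    let out : Bool → ℂ := fun a =>
      ∑ v : Fin (m + 1) → Bool,
        (∏ i : Fin (m + 1), ((if b i && v i then (-1 : ℂ) else 1) / (Real.sqrt 2 : ℂ))) *
          ψ (Fin.cons a v)
    -- exponents, taken mod 2
    let eX : ℕ := hz.toNat
    let eZ : ℕ := ((b (Fin.last m)).toNat +
      ∑ i : Fin m, ((z i).toNat + (z' i).toNat) * (b i.castSucc).toNat) % 2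
    let eH : ℕ := (hz.toNat + hz'.toNat) % 2
    out ≠ 0 → ∃ c : ℂ, c ≠ 0 ∧ out = c • (Xg ^ eX * Zg ^ eZ * Hg ^ eH).mulVec ket0 := by
  intro ψ out eX eZ eH h_ne
  set w := walsh b (Fin.snoc z false)
  have h_out : out = (w / (Real.sqrt 2 : ℂ) ^ (m + 1)) •
      (Pi.single hz 1 + (-1 : ℂ) ^ eZ • Pi.single hz' 1) := by
    rw [show out = _ from measure_tail_two_branches_eq b hz hz' _ _, walsh_snoc_true,
      ← neg_one_pow_eq_pow_mod_two]
    module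
  obtain ⟨c, hc, hu⟩ := exists_smul_XZH_mulVec_ket0 hz hz' eZ
    fun h0 => h_ne (by rw [h_out, h0, smul_zero])
  refine ⟨w / (Real.sqrt 2 : ℂ) ^ (m + 1) * c, ?_, by rw [h_out, hu, smul_smul]⟩
  exact mul_ne_zero (div_ne_zero (walsh_ne_zero _ _) (pow_ne_zero _ sqrt_two_ne_zero)) hc

end QFactory4
end

section
/- Let q ≥ 2 be an even integer and μ a positive integer with 4μ < q. Let n be a positive integer, m ≥ 2, and let K be an m×n matrix over ℤ_q; let K₁ denote the (m−1)×n matrix obtained from K by deleting its first row. Suppose that the map (s, e) ↦ K₁·s + (e mod q), defined for s ∈ (ℤ_q)^n and integer vectors e ∈ ℤ^{m−1} with |e_i| ≤ μ for all i, is injective. Let v ∈ (ℤ_q)^m be the vector (q/2, 0, …, 0) and define g_K(s, e, d) = K·s + (e mod q) + d·v for s ∈ (ℤ_q)^n, e ∈ ℤ^m with |e_i| ≤ μ for all i, and d ∈ {0,1}. Then g_K is injective: g_K(s_1, e_1, d_1) = g_K(s_2, e_2, d_2) implies s_1 = s_2, e_1 = e_2 and d_1 = d_2. -/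
/-! Rows `1, …, m-1` of `g_K` are the LWE map of `K₁`, since `v` vanishes there, so they
determine `s` and all error entries but the first. In row `0` what remains is
`e₀ + d·(q/2) mod q`: two such values with `|e₀| ≤ μ` can only agree when they coincide,
because a difference of two errors has size at most `2μ < q/2`, so it can absorb neither a
multiple of `q` nor a shift by `q/2`. -/

open Matrix

section
variable {q μ : ℕ} {a b : ℤ}

lemma eq_of_intCast_zmod_eq (hμq : 2 * μ < q) (ha : |a| ≤ μ) (hb : |b| ≤ μ)
    (h : (a : ZMod q) = b) : a = b := by
  have hdvd : (q : ℤ) ∣ b - a := (ZMod.intCast_eq_intCast_iff_dvd_sub a b q).mp h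
  rw [abs_le] at ha hb
  have := Int.eq_zero_of_abs_lt_dvd hdvd (by rw [abs_lt]; omega)
  omega

lemma intCast_zmod_add_half_ne (hq : Even q) (hμq : 4 * μ < q) (ha : |a| ≤ μ) (hb : |b| ≤ μ) :
    (a : ZMod q) + ((q / 2 : ℕ) : ZMod q) ≠ b := by
  intro h
  obtain ⟨k, rfl⟩ := hq
  have hdvd : ((k + k : ℕ) : ℤ) ∣ b - (a + k) := by
    rw [← ZMod.intCast_eq_intCast_iff_dvd_sub]; push_cast [← h]
    rw [show (k + k) / 2 = k by omega]
  rw [abs_le] at ha hb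
  have := Int.eq_zero_of_abs_lt_dvd hdvd (by rw [abs_lt]; push_cast; omega)
  omega

lemma eq_and_eq_of_intCast_add_toNat_mul_half_eq (hq : Even q) (hμq : 4 * μ < q)
    (ha : |a| ≤ μ) (hb : |b| ≤ μ) {c d : Bool}
    (h : (a : ZMod q) + (c.toNat : ZMod q) * ((q / 2 : ℕ) : ZMod q) =
      b + (d.toNat : ZMod q) * ((q / 2 : ℕ) : ZMod q)) :
    a = b ∧ c = d := by
  have h2μ : 2 * μ < q := by omega
  cases c <;> cases d <;> simp only [Bool.toNat_false, Bool.toNat_true, Nat.cast_zero,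
    Nat.cast_one, zero_mul, one_mul, add_zero, add_left_inj] at h
  · exact ⟨eq_of_intCast_zmod_eq h2μ ha hb h, rfl⟩
  · exact absurd h.symm (intCast_zmod_add_half_ne hq hμq hb ha)
  · exact absurd h (intCast_zmod_add_half_ne hq hμq ha hb)
  · exact ⟨eq_of_intCast_zmod_eq h2μ ha hb h, rfl⟩

theorem eq_of_mulVec_add_intCast_add_smul_half_eq {ι : Type*} [Fintype ι] {m : ℕ}
    (hq : Even q) (hμq : 4 * μ < q) (K : Matrix (Fin (m + 1)) ι (ZMod q))
    (hK : ∀ (s s' : ι → ZMod q) (e e' : Fin m → ℤ), (∀ i, |e i| ≤ μ) → (∀ i, |e' i| ≤ μ) →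
      K.submatrix Fin.succ id *ᵥ s + (fun i => (e i : ZMod q)) =
        K.submatrix Fin.succ id *ᵥ s' + (fun i => (e' i : ZMod q)) → s = s' ∧ e = e')
    {s s' : ι → ZMod q} {e e' : Fin (m + 1) → ℤ} {d d' : Bool}
    (he : ∀ i, |e i| ≤ μ) (he' : ∀ i, |e' i| ≤ μ)
    (h : K *ᵥ s + (fun i => (e i : ZMod q)) +
        (d.toNat : ZMod q) • Pi.single 0 ((q / 2 : ℕ) : ZMod q) =
      K *ᵥ s' + (fun i => (e' i : ZMod q)) +
        (d'.toNat : ZMod q) • Pi.single 0 ((q / 2 : ℕ) : ZMod q)) :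
    s = s' ∧ e = e' ∧ d = d' := by
  have htail := congrArg (· ∘ Fin.succ) h
  obtain ⟨rfl, htail_e⟩ :=
    hK s s' (e ∘ Fin.succ) (e' ∘ Fin.succ) (fun _ => he _) (fun _ => he' _) <| by
      funext i
      simpa [mulVec, dotProduct] using congrFun htail i
  have hhead := congrFun h 0
  simp only [Pi.add_apply, Pi.smul_apply, Pi.single_eq_same, smul_eq_mul, add_assoc,
    add_right_inj] at hhead
  obtain ⟨h0, rfl⟩ := eq_and_eq_of_intCast_add_toNat_mul_half_eq hq hμq (he 0) (he' 0) hhead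
  exact ⟨rfl, funext fun i => Fin.cases h0 (congrFun htail_e) i, rfl⟩

end

theorem gK_injective (q μ n m : ℕ) (hqeven : Even q) (hμq : 4 * μ < q) (hm : 2 ≤ m)
    (K : Matrix (Fin m) (Fin n) (ZMod q)) :
    let K₁ : Matrix (Fin (m - 1)) (Fin n) (ZMod q) :=
      Matrix.of fun i j => K ⟨(i : ℕ) + 1, by omega⟩ j
    -- injectivity of the LWE map for K₁ on bounded errors
    (∀ (s s' : Fin n → ZMod q) (e e' : Fin (m - 1) → ℤ),
        (∀ i, |e i| ≤ (μ : ℤ)) → (∀ i, |e' i| ≤ (μ : ℤ)) →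
        K₁.mulVec s + (fun i => ((e i : ℤ) : ZMod q)) =
          K₁.mulVec s' + (fun i => ((e' i : ℤ) : ZMod q)) →
        s = s' ∧ e = e') →
    -- conclusion: g_K is injective on bounded errors
    let v : Fin m → ZMod q := fun i => if (i : ℕ) = 0 then ((q / 2 : ℕ) : ZMod q) else 0
    let g : (Fin n → ZMod q) → (Fin m → ℤ) → Bool → (Fin m → ZMod q) :=
      fun s e d => K.mulVec s + (fun i => ((e i : ℤ) : ZMod q)) + (d.toNat : ZMod q) • v
    ∀ (s1 s2 : Fin n → ZMod q) (e1 e2 : Fin m → ℤ) (d1 d2 : Bool),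
      (∀ i, |e1 i| ≤ (μ : ℤ)) → (∀ i, |e2 i| ≤ (μ : ℤ)) →
      g s1 e1 d1 = g s2 e2 d2 → s1 = s2 ∧ e1 = e2 ∧ d1 = d2 := by
  intro K₁ hinj v g s1 s2 e1 e2 d1 d2 hb1 hb2 heq
  obtain ⟨m, rfl⟩ : ∃ m', m = m' + 1 := ⟨m - 1, by omega⟩
  have hv : v = Pi.single 0 ((q / 2 : ℕ) : ZMod q) := by
    funext i
    cases i using Fin.cases <;> simp [v]
  simp only [g, hv] at heq
  -- `K₁` is `K.submatrix Fin.succ id`, as `m + 1 - 1` reduces to `m`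
  exact eq_of_mulVec_add_intCast_add_smul_half_eq hqeven hμq K hinj hb1 hb2 heq
end

section
/- Let D and R be additive commutative groups and let g : D → R be an injective additive group homomorphism. Fix z_0 ∈ D and define f : D × {0,1} → R by f(z, c) = g(z) + c·g(z_0). Then f is exactly 2-regular: for every z ∈ D, the full preimage of f(z, 0) under f is exactly the two-element set {(z, 0), (z − z_0, 1)}; in particular every element of the range of f has exactly two preimages. Moreover, if h : D → ℤ₂ is any map satisfying h(z_1) + h(z_2) = h(z_2 − z_1) for all z_1, z_2 ∈ D, then for every y in the range of f, writing its two preimages as (z, 0) and (z', 1), one has h(z) + h(z') = h(z_0). (This is the key structural fact underlying the security of Malicious 4-states QFactory: the basis bit B_1 = h(z) ⊕ h(z') equals h(z_0) and hence is independent of the server's messages.) -/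
/-! Since `g` is an additive homomorphism, `f(z, c) = g(z + c·z₀)`, and since it is injective,
`f(w, c) = f(z, 0)` exactly when `w + c·z₀ = z`. So the two preimages of `f(z, 0)` are `z` and
`z' = z - z₀`, and the identity for `h` gives `h(z') + h(z) = h(z - z') = h(z₀)`. -/

section BitShift

variable {D R : Type*} [AddCommGroup D] [AddCommGroup R] (g : D →+ R) (z0 : D)

def bitShift (p : D × Bool) : R := g p.1 + if p.2 then g z0 else 0

@[simp]
lemma bitShift_false (z : D) : bitShift g z0 (z, false) = g z := by
  simp [bitShift]

@[simp]
lemma bitShift_true (z : D) : bitShift g z0 (z, true) = g (z + z0) := by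
  simp [bitShift]

variable {g}

lemma preimage_bitShift (hg : Function.Injective g) (z : D) :
    bitShift g z0 ⁻¹' {bitShift g z0 (z, false)} = {(z, false), (z - z0, true)} := by
  ext ⟨w, _ | _⟩ <;> simp [-map_add, hg.eq_iff, eq_sub_iff_add_eq]

lemma ncard_preimage_bitShift (hg : Function.Injective g) {y : R}
    (hy : y ∈ Set.range (bitShift g z0)) : (bitShift g z0 ⁻¹' {y}).ncard = 2 := by
  obtain ⟨z, rfl⟩ : ∃ z, bitShift g z0 (z, false) = y := by
    obtain ⟨⟨z, _ | _⟩, rfl⟩ := hy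
    exacts [⟨z, rfl⟩, ⟨z + z0, by simp⟩]
  rw [preimage_bitShift z0 hg, Set.ncard_pair (by simp)]

lemma sub_eq_of_bitShift_eq (hg : Function.Injective g) {z z' : D}
    (h : bitShift g z0 (z, false) = bitShift g z0 (z', true)) : z - z' = z0 := by
  rw [bitShift_false, bitShift_true, hg.eq_iff] at h
  rw [h, add_sub_cancel_left]

end BitShift

theorem two_regular_and_basis_bit
    {D R : Type*} [AddCommGroup D] [AddCommGroup R]
    (g : D →+ R) (hg : Function.Injective g) (z0 : D)
    (f : D × Bool → R)
    (hf : ∀ (z : D) (c : Bool), f (z, c) = g z + if c then g z0 else 0) :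
    -- exact 2-regularity: the preimage of f(z,0) is exactly {(z,false), (z−z₀,true)}
    (∀ z : D, f ⁻¹' {f (z, false)} = {(z, false), (z - z0, true)}) ∧
    -- every element of the range has exactly two preimages
    (∀ y ∈ Set.range f, (f ⁻¹' {y}).ncard = 2) ∧
    -- for homomorphic h, the XOR of the h-values of the two preimages equals h(z₀)
    (∀ h : D → ZMod 2, (∀ z1 z2 : D, h z1 + h z2 = h (z2 - z1)) →
      ∀ y ∈ Set.range f, ∀ z z' : D,
        f (z, false) = y → f (z', true) = y → h z + h z' = h z0) := by
  obtain rfl : f = bitShift g z0 := funext fun ⟨z, c⟩ => hf z c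
  refine ⟨preimage_bitShift z0 hg, fun y => ncard_preimage_bitShift z0 hg, ?_⟩
  rintro h hh y - z z' rfl hz'
  rw [add_comm, hh, sub_eq_of_bitShift_eq z0 hg hz'.symm]
end

section
/- Let μ be a probability measure on a measurable space Ω (or a PMF on a type Ω), let a, b, ã, b̃ : Ω → Bool be measurable, and let ε ≥ 0. If P[ã = a and b̃ = b] ≥ 1/4 + ε, then max(P[ã = a], P[b̃ = b], P[ã XOR b̃ = a XOR b]) ≥ 1/2 + (2/3)·ε. (Implication of guessing two predicates: if an adversary guesses a pair of bits with advantage, then it guesses the first bit, the second bit, or their XOR with advantage.) -/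
open MeasureTheory Set
open scoped symmDiff

/- The three events "first bit right", "second bit right", "XOR right" have probabilities
summing to `1 + 2 P[both right]`, since the XOR is right exactly when both or neither bit is.
Their maximum is at least their average `(1 + 2 (1/4 + ε)) / 3 = 1/2 + 2ε/3`. -/

theorem Bool.xor_eq_xor_iff (x y u v : Bool) : xor x y = xor u v ↔ (x = u ↔ y = v) := by
  cases x <;> cases y <;> cases u <;> cases v <;> decide

theorem setOf_xor_eq_xor {Ω : Type*} (a b ta tb : Ω → Bool) :
    {ω | xor (ta ω) (tb ω) = xor (a ω) (b ω)} = ({ω | ta ω = a ω} ∆ {ω | tb ω = b ω})ᶜ := by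
  ext ω
  simp only [mem_ofPred_eq, mem_compl_iff, mem_symmDiff, Bool.xor_eq_xor_iff]
  tauto

theorem measureReal_compl_symmDiff {Ω : Type*} [MeasurableSpace Ω] (μ : Measure Ω)
    [IsProbabilityMeasure μ] {s t : Set Ω} (hs : MeasurableSet s) (ht : MeasurableSet t) :
    μ.real (s ∆ t)ᶜ = 1 - μ.real s - μ.real t + 2 * μ.real (s ∩ t) := by
  have hst := measureReal_inter_add_sdiff (μ := μ) (s := s) ht
  have hts := measureReal_inter_add_sdiff (μ := μ) (s := t) hs
  rw [inter_comm] at hts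
  rw [measureReal_compl (hs.symmDiff ht), probReal_univ, measureReal_symmDiff_eq hs ht]
  linarith

theorem guess_two_predicates_general {Ω : Type*} [MeasurableSpace Ω]
    (μ : MeasureTheory.Measure Ω) [MeasureTheory.IsProbabilityMeasure μ]
    (a b ta tb : Ω → Bool)
    (ha : Measurable a) (hb : Measurable b) (hta : Measurable ta) (htb : Measurable tb)
    (ε : ℝ)
    (hguess : 1 / 4 + ε ≤ (μ {ω | ta ω = a ω ∧ tb ω = b ω}).toReal) :
    1 / 2 + (2 / 3) * ε ≤
      max (max (μ {ω | ta ω = a ω}).toReal (μ {ω | tb ω = b ω}).toReal)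
        (μ {ω | xor (ta ω) (tb ω) = xor (a ω) (b ω)}).toReal := by
  have hxor := measureReal_compl_symmDiff μ (measurableSet_eq_fun hta ha)
    (measurableSet_eq_fun htb hb)
  simp only [measureReal_def, ← ofPred_and, ← setOf_xor_eq_xor] at hxor
  by_contra! h
  simp only [max_lt_iff] at h
  linarith

theorem guess_two_predicates {Ω : Type*} [MeasurableSpace Ω]
    (μ : MeasureTheory.Measure Ω) [MeasureTheory.IsProbabilityMeasure μ]
    (a b ta tb : Ω → Bool)
    (ha : Measurable a) (hb : Measurable b) (hta : Measurable ta) (htb : Measurable tb)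
    (ε : ℝ) (hε : 0 ≤ ε)
    (hguess : 1 / 4 + ε ≤ (μ {ω | ta ω = a ω ∧ tb ω = b ω}).toReal) :
    1 / 2 + (2 / 3) * ε ≤
      max (max (μ {ω | ta ω = a ω}).toReal (μ {ω | tb ω = b ω}).toReal)
        (μ {ω | xor (ta ω) (tb ω) = xor (a ω) (b ω)}).toReal :=
  guess_two_predicates_general μ a b ta tb ha hb hta htb ε hguess
end

section
/- Let G be a commutative group, let Z and Z₀ be finite nonempty subsets of G, let Y be a commutative group, and extend the group operation ⋆ of Y to Option Y (i.e. Y ∪ {⊥}) by setting (some y₁) ⋆ (some y₂) = some (y₁ ⋆ y₂) and making ⊥ absorbing. Let 𝒦 be a type of keys with a probability distribution κ, let 𝒟 be a probability distribution on Z₀, and let g : 𝒦 → G → Option Y be a family of functions each injective on Z (for every k and every y ∈ Y there is at most one z ∈ Z with g_k(z) = some y). Suppose the family is (η, Z, Z₀, 𝒟)-homomorphic: Pr over k ∼ κ, z₀ ∼ 𝒟, z uniform on Z of the event [ z·z₀ ∈ Z and g_k(z) ⋆ g_k(z₀) = g_k(z·z₀) ≠ ⊥ ] is at least η. For each k and z₀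 define f_{k,z₀} : Z × {0,1} → Option Y by f_{k,z₀}(z, 0) = g_k(z) and f_{k,z₀}(z, 1) = g_k(z) ⋆ g_k(z₀). Then the family {f_{k,z₀}} is η-2-regular: Pr over k ∼ κ, z₀ ∼ 𝒟, z uniform on Z, c uniform on {0,1} of the event [ f_{k,z₀}(z, c) = some y for some y ∈ Y having exactly two preimages in Z × {0,1} under f_{k,z₀} ] is at least η. -/
/-! Fix `k` and `z₀`. If `z ∈ Z` satisfies the homomorphism condition with value
`y = g k (z * z₀)`, injectivity of `g k` on `Z` and cancellation in `Y` show that the preimage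
of `y` under `f k z₀` is exactly `{(z * z₀, false), (z, true)}`. Hence every good `z` makes both
`(z, true)` and `(z * z₀, false)` two-to-one points, and since `z ↦ z * z₀` is injective, each
half `c = true`, `c = false` of the regularity event is at least as likely as the
homomorphism event. -/

open scoped ENNReal

namespace PMF

variable {α β γ : Type*}

theorem toOuterMeasure_bind_mono {p : PMF α} {q : α → PMF β} {q' : α → PMF γ}
    {s : Set β} {t : Set γ} (h : ∀ a, (q a).toOuterMeasure s ≤ (q' a).toOuterMeasure t) :
    (p.bind q).toOuterMeasure s ≤ (p.bind q').toOuterMeasure t := by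
  simp only [toOuterMeasure_bind_apply]
  exact ENNReal.tsum_le_tsum fun a => mul_le_mul_right (h a) _

theorem toOuterMeasure_map_uniformBool_apply (h : Bool → β) (t : Set β) :
    ((uniformOfFintype Bool).map h).toOuterMeasure t =
      t.indicator (fun _ => (2⁻¹ : ℝ≥0∞)) (h false) + t.indicator (fun _ => 2⁻¹) (h true) := by
  classical
  rw [toOuterMeasure_map_apply, toOuterMeasure_apply, tsum_bool]
  simp [Set.indicator_apply]

theorem toOuterMeasure_bind_map_uniformBool_apply (p : PMF α) (h : α → Bool → β) (t : Set β) :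
    (p.bind fun a => (uniformOfFintype Bool).map (h a)).toOuterMeasure t =
      p.toOuterMeasure {a | h a false ∈ t} / 2 + p.toOuterMeasure {a | h a true ∈ t} / 2 := by
  classical
  rw [toOuterMeasure_bind_apply, toOuterMeasure_apply, toOuterMeasure_apply, div_eq_mul_inv,
    div_eq_mul_inv, ← ENNReal.tsum_mul_right, ← ENNReal.tsum_mul_right, ← ENNReal.tsum_add]
  refine tsum_congr fun a => ?_
  rw [toOuterMeasure_map_uniformBool_apply]
  simp only [Set.indicator_apply, Set.mem_ofPred_eq, mul_add]
  split_ifs <;> simp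

theorem toOuterMeasure_uniformOfFinset_le_of_injOn {s : Finset α} (hs : s.Nonempty)
    {t t' : Set α} {f : α → α} (hf : Set.InjOn f (↑s ∩ t))
    (hmaps : Set.MapsTo f (↑s ∩ t) (↑s ∩ t')) :
    (uniformOfFinset s hs).toOuterMeasure t ≤ (uniformOfFinset s hs).toOuterMeasure t' := by
  classical
  simp only [toOuterMeasure_uniformOfFinset_apply]
  refine ENNReal.div_le_div_right (Nat.cast_le.mpr (Finset.card_le_card_of_injOn f ?_ ?_)) _
  · intro a ha
    simpa using hmaps (by simpa using ha)
  · intro a ha b hb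
    exact hf (by simpa using ha) (by simpa using hb)

theorem toOuterMeasure_uniformOfFinset_le_bind_map_uniformBool {s : Finset α} (hs : s.Nonempty)
    {t : Set α} {t' : Set β} (h : α → Bool → β) {f : α → α} (hf : Set.InjOn f (↑s ∩ t))
    (hfalse : ∀ a ∈ ↑s ∩ t, f a ∈ s ∧ h (f a) false ∈ t') (htrue : ∀ a ∈ ↑s ∩ t, h a true ∈ t') :
    (uniformOfFinset s hs).toOuterMeasure t ≤
      ((uniformOfFinset s hs).bind fun a => (uniformOfFintype Bool).map (h a)).toOuterMeasure t' := by
  rw [toOuterMeasure_bind_map_uniformBool_apply, ← ENNReal.add_halves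
    ((uniformOfFinset s hs).toOuterMeasure t)]
  gcongr ?_ / 2 + ?_ / 2
  · exact toOuterMeasure_uniformOfFinset_le_of_injOn hs (t' := {a | h a false ∈ t'}) hf hfalse
  · exact toOuterMeasure_uniformOfFinset_le_of_injOn hs (t' := {a | h a true ∈ t'})
      (Set.injOn_id _) fun a ha => ⟨ha.1, htrue a ha⟩

end PMF

section

variable {G Y : Type*} [Mul G] [Mul Y] [IsRightCancelMul Y] {Z : Finset G} {g : G → Option Y}
  {z₀ z : G} {F : G × Bool → Option Y}

theorem fiber_eq_pair_of_map₂_eq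
    (hinj : ∀ y : Y, ∀ z1 ∈ Z, ∀ z2 ∈ Z, g z1 = some y → g z2 = some y → z1 = z2)
    (hF : ∀ z c, F (z, c) = if c then Option.map₂ (· * ·) (g z) (g z₀) else g z)
    (hz : z ∈ Z) (hzz₀ : z * z₀ ∈ Z) {y : Y}
    (hhom : Option.map₂ (· * ·) (g z) (g z₀) = some y) (hy : g (z * z₀) = some y) :
    {zc : G × Bool | zc.1 ∈ Z ∧ F zc = some y} = {(z * z₀, false), (z, true)} := by
  obtain ⟨y₁, y₀, hy₁ : g z = some y₁, hy₀ : g z₀ = some y₀, rfl⟩ :=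
    Option.map₂_eq_some_iff.mp hhom
  ext ⟨w, c⟩
  cases c
  · simp only [Set.mem_ofPred_eq, hF, Bool.false_eq_true, if_false, Set.mem_insert_iff,
      Set.mem_singleton_iff, Prod.mk.injEq, and_true, and_false, or_false]
    exact ⟨fun ⟨hw, hgw⟩ => hinj _ w hw _ hzz₀ hgw hy, by rintro rfl; exact ⟨hzz₀, hy⟩⟩
  · simp only [Set.mem_ofPred_eq, hF, if_true, Set.mem_insert_iff, Set.mem_singleton_iff,
      Prod.mk.injEq, and_true, Bool.true_eq_false, and_false, false_or, hy₀,
      Option.map₂_coe_right, Option.map_eq_some_iff, mul_left_inj, exists_eq_right]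
    exact ⟨fun ⟨hw, hgw⟩ => hinj _ w hw z hz hgw hy₁, by rintro rfl; exact ⟨hz, hy₁⟩⟩

theorem exists_fiber_ncard_two_of_map₂_eq
    (hinj : ∀ y : Y, ∀ z1 ∈ Z, ∀ z2 ∈ Z, g z1 = some y → g z2 = some y → z1 = z2)
    (hF : ∀ z c, F (z, c) = if c then Option.map₂ (· * ·) (g z) (g z₀) else g z)
    (hz : z ∈ Z) (hzz₀ : z * z₀ ∈ Z)
    (hhom : Option.map₂ (· * ·) (g z) (g z₀) = g (z * z₀)) (hne : g (z * z₀) ≠ none)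
    {zc : G × Bool} (hzc : zc = (z * z₀, false) ∨ zc = (z, true)) :
    ∃ y, F zc = some y ∧ {zc' : G × Bool | zc'.1 ∈ Z ∧ F zc' = some y}.ncard = 2 := by
  obtain ⟨y, hy⟩ := Option.ne_none_iff_exists'.mp hne
  have hfiber := fiber_eq_pair_of_map₂_eq hinj hF hz hzz₀ (hhom.trans hy) hy
  have hmem : zc ∈ {zc' : G × Bool | zc'.1 ∈ Z ∧ F zc' = some y} := by
    rw [hfiber]
    exact hzc
  exact ⟨y, hmem.2, by rw [hfiber]; exact Set.ncard_pair (by simp)⟩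

end

theorem homomorphic_to_two_regular_general
    {G : Type*} [CommGroup G] {Y : Type*} [CommGroup Y]
    (Z : Finset G) (hZ : Z.Nonempty)
    {K : Type*} (κ : PMF K)
    (𝒟 : PMF G)
    (g : K → G → Option Y)
    -- each g_k is injective on Z
    (hg_inj : ∀ k, ∀ y : Y, ∀ z1 ∈ Z, ∀ z2 ∈ Z,
      g k z1 = some y → g k z2 = some y → z1 = z2)
    -- the family f_{k,z₀}
    (f : K → G → G × Bool → Option Y)
    (hf : ∀ (k : K) (z0 z : G) (c : Bool),
      f k z0 (z, c) = if c then Option.map₂ (· * ·) (g k z) (g k z0) else g k z)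
    (η : ℝ≥0∞)
    -- (η, Z, Z₀, 𝒟)-homomorphic: Pr over k ∼ κ, z₀ ∼ 𝒟, z uniform on Z
    (hhom : η ≤ (κ.bind fun k => 𝒟.bind fun z0 =>
        (PMF.uniformOfFinset Z hZ).map fun z => (k, z0, z)).toOuterMeasure
      {x : K × G × G | x.2.2 * x.2.1 ∈ Z ∧
        Option.map₂ (· * ·) (g x.1 x.2.2) (g x.1 x.2.1) = g x.1 (x.2.2 * x.2.1) ∧
        g x.1 (x.2.2 * x.2.1) ≠ none}) :
    -- η-2-regularity: Pr over k ∼ κ, z₀ ∼ 𝒟, z uniform on Z, c uniform on Bool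
    η ≤ (κ.bind fun k => 𝒟.bind fun z0 =>
        (PMF.uniformOfFinset Z hZ).bind fun z =>
          (PMF.uniformOfFintype Bool).map fun c => (k, z0, z, c)).toOuterMeasure
      {x : K × G × G × Bool | ∃ y : Y,
        f x.1 x.2.1 (x.2.2.1, x.2.2.2) = some y ∧
        {zc : G × Bool | zc.1 ∈ Z ∧ f x.1 x.2.1 zc = some y}.ncard = 2} := by
  refine hhom.trans <| PMF.toOuterMeasure_bind_mono fun k =>
    PMF.toOuterMeasure_bind_mono fun z0 => ?_
  rw [PMF.toOuterMeasure_map_apply]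
  refine PMF.toOuterMeasure_uniformOfFinset_le_bind_map_uniformBool hZ _
    (mul_left_injective z0).injOn ?_ ?_
  · rintro z ⟨hz, hzz0, hmap, hne⟩
    exact ⟨hzz0, exists_fiber_ncard_two_of_map₂_eq (hg_inj k) (hf k z0) hz hzz0 hmap hne
      (Or.inl rfl)⟩
  · rintro z ⟨hz, hzz0, hmap, hne⟩
    exact exists_fiber_ncard_two_of_map₂_eq (hg_inj k) (hf k z0) hz hzz0 hmap hne (Or.inr rfl)

theorem homomorphic_to_two_regular
    {G : Type*} [CommGroup G] {Y : Type*} [CommGroup Y]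
    (Z Z0 : Finset G) (hZ : Z.Nonempty) (hZ0 : Z0.Nonempty)
    {K : Type*} (κ : PMF K)
    (𝒟 : PMF G) (h𝒟 : ∀ z ∈ 𝒟.support, z ∈ Z0)
    (g : K → G → Option Y)
    -- each g_k is injective on Z
    (hg_inj : ∀ k, ∀ y : Y, ∀ z1 ∈ Z, ∀ z2 ∈ Z,
      g k z1 = some y → g k z2 = some y → z1 = z2)
    -- the family f_{k,z₀}
    (f : K → G → G × Bool → Option Y)
    (hf : ∀ (k : K) (z0 z : G) (c : Bool),
      f k z0 (z, c) = if c then Option.map₂ (· * ·) (g k z) (g k z0) else g k z)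
    (η : ℝ≥0∞)
    -- (η, Z, Z₀, 𝒟)-homomorphic: Pr over k ∼ κ, z₀ ∼ 𝒟, z uniform on Z
    (hhom : η ≤ (κ.bind fun k => 𝒟.bind fun z0 =>
        (PMF.uniformOfFinset Z hZ).map fun z => (k, z0, z)).toOuterMeasure
      {x : K × G × G | x.2.2 * x.2.1 ∈ Z ∧
        Option.map₂ (· * ·) (g x.1 x.2.2) (g x.1 x.2.1) = g x.1 (x.2.2 * x.2.1) ∧
        g x.1 (x.2.2 * x.2.1) ≠ none}) :
    -- η-2-regularity: Pr over k ∼ κ, z₀ ∼ 𝒟, z uniform on Z, c uniform on Bool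
    η ≤ (κ.bind fun k => 𝒟.bind fun z0 =>
        (PMF.uniformOfFinset Z hZ).bind fun z =>
          (PMF.uniformOfFintype Bool).map fun c => (k, z0, z, c)).toOuterMeasure
      {x : K × G × G × Bool | ∃ y : Y,
        f x.1 x.2.1 (x.2.2.1, x.2.2.2) = some y ∧
        {zc : G × Bool | zc.1 ∈ Z ∧ f x.1 x.2.1 zc = some y}.ncard = 2} :=
  homomorphic_to_two_regular_general Z hZ κ 𝒟 g hg_inj f hf η hhom
end

section
/- Let E be a complex inner product space and ψ₀, ψ₁ ∈ E orthonormal. Let ψ : {0,1,…,7} → E be unit vectors with ψ(0) = ψ₀ and ψ(4) = ψ₁, satisfying: (i) each ψ(L) lies in the span of {ψ₀, ψ₁}; (ii) |⟪ψ₀, ψ(L)⟫| = |cos(Lπ/8)| and |⟪ψ₁, ψ(L)⟫| = |sin(Lπ/8)| for every L; (iii) ⟪ψ(L + 4 mod 8), ψ(L)⟫ = 0 for every L; (iv) |⟪ψ(2), ψ(1)⟫| = cos(π/8) and |⟪ψ(2), ψ(3)⟫| = cos(π/8). Then there exists a real number φ such that for every L ∈ {0,…,7} there is a complex number c_L of modulus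 1 with ψ(L) = c_L·( cos(Lπ/8)·ψ₀ + e^{iφ}·sin(Lπ/8)·ψ₁ ). (Exact version of the lemma determining the form of the eight self-tested states in i.i.d. blind self-testing.) -/
/-!
Write `ψ L = a • ψ₀ + b • ψ₁`. By (ii), up to a global phase, only the relative phase of `b`
against `a` is unknown; it is read off from `ψ 1`. The hypothesis `‖⟪ψ 2, ψ 1⟫‖ = cos (π/8)`
says that the triangle inequality for the two terms of `⟪ψ 1, ψ 2⟫ = conj a₁ a₂ + conj b₁ b₂`
is an equality, which forces `ψ 2`, and likewise `ψ 3`, to carry the same phase. Orthogonality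
to `ψ L` then forces `ψ (L + 4)` to carry it as well, while for `L = 0, 4` one of the two
coefficients vanishes.
-/

open ComplexConjugate Real
open scoped InnerProductSpace

/-- `(a, b)` is a multiple of `(cos θ, w * sin θ)`, cross-multiplied so that it makes sense
also when `cos θ = 0`. -/
def HasRelativePhase (w : ℂ) (θ : ℝ) (a b : ℂ) : Prop :=
  b * cos θ = w * sin θ * a

lemma cos_pos_and_sin_pos_of_mem_Ioo {θ : ℝ} (hθ : θ ∈ Set.Ioo 0 (π / 2)) :
    0 < cos θ ∧ 0 < sin θ :=
  ⟨cos_pos_of_mem_Ioo ⟨by linarith [hθ.1, pi_pos], hθ.2⟩,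
    sin_pos_of_pos_of_lt_pi hθ.1 (by linarith [hθ.2, pi_pos])⟩

lemma mul_conj_eq_one_of_norm_eq_one {w : ℂ} (hw : ‖w‖ = 1) : w * conj w = 1 := by
  rw [Complex.mul_conj', hw, Complex.ofReal_one, one_pow]

section RelativePhase

variable {a b a' b' w : ℂ} {θ α β : ℝ}

lemma exists_hasRelativePhase (ha : ‖a‖ = |cos θ|) (hb : ‖b‖ = |sin θ|)
    (hc : cos θ ≠ 0) (hs : sin θ ≠ 0) : ∃ w : ℂ, ‖w‖ = 1 ∧ HasRelativePhase w θ a b := by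
  refine ⟨b * conj a / (cos θ * sin θ), ?_, ?_⟩
  · rw [norm_div, norm_mul, Complex.norm_conj, ha, hb, ← Complex.ofReal_mul, Complex.norm_real,
      norm_mul, Real.norm_eq_abs, Real.norm_eq_abs]
    field_simp [abs_ne_zero.mpr hc, abs_ne_zero.mpr hs]
  · have haa : conj a * a = (cos θ : ℂ) ^ 2 := by
      rw [Complex.conj_mul', ha, ← Complex.ofReal_pow, sq_abs, Complex.ofReal_pow]
    have hc' : (cos θ : ℂ) ≠ 0 := Complex.ofReal_ne_zero.mpr hc
    have hs' : (sin θ : ℂ) ≠ 0 := Complex.ofReal_ne_zero.mpr hs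
    rw [HasRelativePhase]
    field_simp
    linear_combination (-b) * haa

lemma hasRelativePhase_of_cos_eq_zero_or_sin_eq_zero (ha : ‖a‖ = |cos θ|) (hb : ‖b‖ = |sin θ|)
    (h : cos θ = 0 ∨ sin θ = 0) : HasRelativePhase w θ a b := by
  rcases h with h | h
  · rw [h, abs_zero, norm_eq_zero] at ha
    simp [HasRelativePhase, ha, h]
  · rw [h, abs_zero, norm_eq_zero] at hb
    simp [HasRelativePhase, hb, h]

lemma HasRelativePhase.add_pi_div_two (h : HasRelativePhase w θ a b) (hw : ‖w‖ = 1)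
    (ha : a ≠ 0) (horth : conj a' * a + conj b' * b = 0) :
    HasRelativePhase w (θ + π / 2) a' b' := by
  rw [HasRelativePhase] at h
  have h1 : conj a' * cos θ + conj b' * w * sin θ = 0 := by
    apply mul_left_cancel₀ ha
    linear_combination (cos θ : ℂ) * horth - conj b' * h
  have h2 : a' * cos θ + b' * conj w * sin θ = 0 := by
    simpa only [map_add, map_mul, Complex.conj_conj, Complex.conj_ofReal, map_zero]
      using congrArg conj h1
  rw [HasRelativePhase, cos_add_pi_div_two, sin_add_pi_div_two, Complex.ofReal_neg]
  linear_combination (-w) * h2 + b' * sin θ * mul_conj_eq_one_of_norm_eq_one hw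

lemma HasRelativePhase.of_norm_inner (h : HasRelativePhase w α a b) (hw : ‖w‖ = 1)
    (hα : α ∈ Set.Ioo 0 (π / 2)) (hβ : β ∈ Set.Icc 0 (π / 2)) (ha : ‖a‖ = |cos α|)
    (ha' : ‖a'‖ = |cos β|) (hb' : ‖b'‖ = |sin β|)
    (hinner : ‖conj a * a' + conj b * b'‖ = cos (β - α)) :
    HasRelativePhase w β a' b' := by
  rw [HasRelativePhase] at h
  obtain ⟨hcα, hsα⟩ := cos_pos_and_sin_pos_of_mem_Ioo hα
  have hcβ : 0 ≤ cos β := cos_nonneg_of_mem_Icc ⟨by linarith [hβ.1, pi_pos], hβ.2⟩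
  have hsβ : 0 ≤ sin β := sin_nonneg_of_nonneg_of_le_pi hβ.1 (by linarith [hβ.2, pi_pos])
  rw [abs_of_pos hcα] at ha
  rw [abs_of_nonneg hcβ] at ha'
  rw [abs_of_nonneg hsβ] at hb'
  set u : ℂ := cos α * a'
  set v : ℂ := sin α * (conj w * b')
  have hu : ‖u‖ = cos α * cos β := by
    rw [norm_mul, Complex.norm_real, Real.norm_of_nonneg hcα.le, ha']
  have hv : ‖v‖ = sin α * sin β := by
    rw [norm_mul, norm_mul, Complex.norm_real, Real.norm_of_nonneg hsα.le, Complex.norm_conj,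
      hw, one_mul, hb']
  have hfactor : (cos α : ℂ) * (conj a * a' + conj b * b') = conj a * (u + v) := by
    have h' : conj b * cos α = conj w * sin α * conj a := by
      simpa only [map_mul, Complex.conj_ofReal] using congrArg conj h
    linear_combination b' * h'
  have hadd : ‖u + v‖ = ‖u‖ + ‖v‖ := by
    have := congrArg norm hfactor
    rw [norm_mul, norm_mul, hinner, Complex.norm_conj, ha, Complex.norm_real,
      Real.norm_of_nonneg hcα.le] at this
    rw [hu, hv, ← mul_left_cancel₀ hcα.ne' this, cos_sub]
    ring
  have hray := (sameRay_iff_norm_add.mpr hadd).norm_smul_eq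
  rw [hu, hv, Complex.real_smul, Complex.real_smul] at hray
  rw [HasRelativePhase]
  apply mul_left_cancel₀ (Complex.ofReal_ne_zero.mpr (mul_pos hcα hsα).ne')
  simp only [u, v, Complex.ofReal_mul] at hray ⊢
  linear_combination w * hray - cos α * sin α * cos β * b' * mul_conj_eq_one_of_norm_eq_one hw

lemma HasRelativePhase.exists_norm_eq_one (h : HasRelativePhase w θ a b) (hw : ‖w‖ = 1)
    (ha : ‖a‖ = |cos θ|) (hb : ‖b‖ = |sin θ|) :
    ∃ c : ℂ, ‖c‖ = 1 ∧ a = c * cos θ ∧ b = c * (w * sin θ) := by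
  rw [HasRelativePhase] at h
  have hww := mul_conj_eq_one_of_norm_eq_one hw
  have hsc : (sin θ : ℂ) ^ 2 + (cos θ : ℂ) ^ 2 = 1 := by exact_mod_cast sin_sq_add_cos_sq θ
  -- the inner product of `(cos θ, w * sin θ)` with `(a, b)`
  set c : ℂ := cos θ * a + conj w * sin θ * b
  have hac : a = c * cos θ := by
    linear_combination (-conj w * sin θ) * h - a * hsc - sin θ ^ 2 * a * hww
  have hbc : b = c * (w * sin θ) := by
    linear_combination (cos θ : ℂ) * h - b * hsc - sin θ ^ 2 * b * hww
  refine ⟨c, ?_, hac, hbc⟩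
  by_contra hc
  have hcos : cos θ = 0 := by
    rw [hac, norm_mul, Complex.norm_real, Real.norm_eq_abs] at ha
    have : (‖c‖ - 1) * |cos θ| = 0 := by linarith
    simpa [sub_ne_zero.mpr hc] using this
  have hsin : sin θ = 0 := by
    rw [hbc, norm_mul, norm_mul, hw, one_mul, Complex.norm_real, Real.norm_eq_abs] at hb
    have : (‖c‖ - 1) * |sin θ| = 0 := by linarith
    simpa [sub_ne_zero.mpr hc] using this
  simpa [hcos, hsin] using sin_sq_add_cos_sq θ

end RelativePhase

section SpanPair

variable {E : Type*} [NormedAddCommGroup E] [InnerProductSpace ℂ E] {ψ0 ψ1 u v : E}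
  (h00 : ⟪ψ0, ψ0⟫_ℂ = 1) (h11 : ⟪ψ1, ψ1⟫_ℂ = 1) (h01 : ⟪ψ0, ψ1⟫_ℂ = 0)
include h00 h11 h01

lemma eq_inner_smul_add_inner_smul_of_mem_span_pair (hv : v ∈ Submodule.span ℂ {ψ0, ψ1}) :
    v = ⟪ψ0, v⟫_ℂ • ψ0 + ⟪ψ1, v⟫_ℂ • ψ1 := by
  have h10 : ⟪ψ1, ψ0⟫_ℂ = 0 := by rw [← inner_conj_symm, h01, map_zero]
  obtain ⟨c, d, rfl⟩ := Submodule.mem_span_pair.mp hv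
  simp only [inner_add_right, inner_smul_right, h00, h11, h01, h10, mul_one, mul_zero, add_zero,
    zero_add]

lemma inner_eq_of_mem_span_pair (hu : u ∈ Submodule.span ℂ {ψ0, ψ1})
    (hv : v ∈ Submodule.span ℂ {ψ0, ψ1}) :
    ⟪u, v⟫_ℂ = conj ⟪ψ0, u⟫_ℂ * ⟪ψ0, v⟫_ℂ + conj ⟪ψ1, u⟫_ℂ * ⟪ψ1, v⟫_ℂ := by
  have h10 : ⟪ψ1, ψ0⟫_ℂ = 0 := by rw [← inner_conj_symm, h01, map_zero]
  conv_lhs => rw [eq_inner_smul_add_inner_smul_of_mem_span_pair h00 h11 h01 hu,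
    eq_inner_smul_add_inner_smul_of_mem_span_pair h00 h11 h01 hv]
  simp only [inner_add_left, inner_add_right, inner_smul_left, inner_smul_right, h00, h11, h01,
    h10, mul_one, mul_zero, add_zero, zero_add]
  ring

lemma exists_eq_smul_of_hasRelativePhase {w : ℂ} {θ : ℝ} (hv : v ∈ Submodule.span ℂ {ψ0, ψ1})
    (hw : ‖w‖ = 1) (h : HasRelativePhase w θ ⟪ψ0, v⟫_ℂ ⟪ψ1, v⟫_ℂ)
    (ha : ‖⟪ψ0, v⟫_ℂ‖ = |cos θ|) (hb : ‖⟪ψ1, v⟫_ℂ‖ = |sin θ|) :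
    ∃ c : ℂ, ‖c‖ = 1 ∧ v = c • ((cos θ : ℂ) • ψ0 + (w * sin θ) • ψ1) := by
  obtain ⟨c, hc, hac, hbc⟩ := h.exists_norm_eq_one hw ha hb
  refine ⟨c, hc, ?_⟩
  conv_lhs => rw [eq_inner_smul_add_inner_smul_of_mem_span_pair h00 h11 h01 hv]
  rw [hac, hbc, smul_add, smul_smul, smul_smul]

end SpanPair

lemma eighth_angle_mem_Ioo {L : Fin 8} (h0 : 0 < (L : ℕ)) (h4 : (L : ℕ) < 4) :
    ((L : ℕ) : ℝ) * π / 8 ∈ Set.Ioo 0 (π / 2) := by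
  have h0' : (0 : ℝ) < (L : ℕ) := by exact_mod_cast h0
  have h4' : ((L : ℕ) : ℝ) < 4 := by exact_mod_cast h4
  constructor <;> nlinarith [pi_pos]

lemma eighth_angle_add_four {L : Fin 8} (h4 : (L : ℕ) < 4) :
    (((L + 4 : Fin 8) : ℕ) : ℝ) * π / 8 = ((L : ℕ) : ℝ) * π / 8 + π / 2 := by
  have h : ((L + 4 : Fin 8) : ℕ) = (L : ℕ) + 4 := by rw [Fin.val_add]; simp; omega
  rw [h]
  push_cast
  ring

theorem eight_states_form_general
    {E : Type*} [NormedAddCommGroup E] [InnerProductSpace ℂ E]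
    (ψ0 ψ1 : E)
    (h00 : (inner ℂ ψ0 ψ0 : ℂ) = 1) (h11 : (inner ℂ ψ1 ψ1 : ℂ) = 1)
    (h01 : (inner ℂ ψ0 ψ1 : ℂ) = 0)
    (ψ : Fin 8 → E)
    -- (i) each ψ(L) lies in the span of ψ₀ and ψ₁
    (hspan : ∀ L, ψ L ∈ Submodule.span ℂ ({ψ0, ψ1} : Set E))
    -- (ii) |⟪ψ₀, ψ(L)⟫| = |cos(Lπ/8)| and |⟪ψ₁, ψ(L)⟫| = |sin(Lπ/8)|
    (hcos : ∀ L : Fin 8,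
      ‖(inner ℂ ψ0 (ψ L) : ℂ)‖ = |Real.cos ((L : ℕ) * Real.pi / 8)|)
    (hsin : ∀ L : Fin 8,
      ‖(inner ℂ ψ1 (ψ L) : ℂ)‖ = |Real.sin ((L : ℕ) * Real.pi / 8)|)
    -- (iii) ⟪ψ(L+4 mod 8), ψ(L)⟫ = 0
    (horth : ∀ L : Fin 8, (inner ℂ (ψ (L + 4)) (ψ L) : ℂ) = 0)
    -- (iv) |⟪ψ(2), ψ(1)⟫| = cos(π/8) = |⟪ψ(2), ψ(3)⟫|
    (h21 : ‖(inner ℂ (ψ 2) (ψ 1) : ℂ)‖ = Real.cos (Real.pi / 8))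
    (h23 : ‖(inner ℂ (ψ 2) (ψ 3) : ℂ)‖ = Real.cos (Real.pi / 8)) :
    ∃ φ : ℝ, ∀ L : Fin 8, ∃ c : ℂ, ‖c‖ = 1 ∧
      ψ L = c • ((Real.cos ((L : ℕ) * Real.pi / 8) : ℂ) • ψ0 +
        (Complex.exp ((φ : ℂ) * Complex.I) * (Real.sin ((L : ℕ) * Real.pi / 8) : ℂ)) • ψ1) := by
  have hinner (K L : Fin 8) := inner_eq_of_mem_span_pair h00 h11 h01 (hspan K) (hspan L)
  have hquad (L : Fin 8) (hL : 0 < (L : ℕ) ∧ (L : ℕ) < 4) := eighth_angle_mem_Ioo hL.1 hL.2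
  obtain ⟨hc1, hs1⟩ := cos_pos_and_sin_pos_of_mem_Ioo (hquad 1 (by decide))
  obtain ⟨w, hw, R1⟩ := exists_hasRelativePhase (hcos 1) (hsin 1) hc1.ne' hs1.ne'
  have R2 := R1.of_norm_inner hw (hquad 1 (by decide))
    (Set.Ioo_subset_Icc_self (hquad 2 (by decide))) (hcos 1) (hcos 2) (hsin 2)
    (by rw [← hinner, norm_inner_symm, h21]; congr 1; simp; ring)
  have R3 := R2.of_norm_inner hw (hquad 2 (by decide))
    (Set.Ioo_subset_Icc_self (hquad 3 (by decide))) (hcos 2) (hcos 3) (hsin 3)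
    (by rw [← hinner, h23]; congr 1; simp; ring)
  have R_add_four (L : Fin 8) (hL : 0 < (L : ℕ) ∧ (L : ℕ) < 4)
      (hR : HasRelativePhase w ((L : ℕ) * π / 8) ⟪ψ0, ψ L⟫_ℂ ⟪ψ1, ψ L⟫_ℂ) :
      HasRelativePhase w (((L + 4 : Fin 8) : ℕ) * π / 8) ⟪ψ0, ψ (L + 4)⟫_ℂ ⟪ψ1, ψ (L + 4)⟫_ℂ := by
    rw [eighth_angle_add_four hL.2]
    refine hR.add_pi_div_two hw ?_ (by rw [← hinner]; exact horth L)
    rw [← norm_ne_zero_iff, hcos, abs_ne_zero]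
    exact (cos_pos_and_sin_pos_of_mem_Ioo (hquad L hL)).1.ne'
  obtain ⟨φ, rfl⟩ := (Complex.norm_eq_one_iff w).mp hw
  refine ⟨φ, fun L => exists_eq_smul_of_hasRelativePhase h00 h11 h01 (hspan L) hw ?_ (hcos L)
    (hsin L)⟩
  fin_cases L
  · exact hasRelativePhase_of_cos_eq_zero_or_sin_eq_zero (hcos 0) (hsin 0) (by simp)
  · exact R1
  · exact R2
  · exact R3
  · refine hasRelativePhase_of_cos_eq_zero_or_sin_eq_zero (hcos 4) (hsin 4) (.inl ?_)
    rw [← cos_pi_div_two]; congr 1; simp; ring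
  · exact R_add_four 1 (by decide) R1
  · exact R_add_four 2 (by decide) R2
  · exact R_add_four 3 (by decide) R3

theorem eight_states_form
    {E : Type*} [NormedAddCommGroup E] [InnerProductSpace ℂ E]
    (ψ0 ψ1 : E)
    (h00 : (inner ℂ ψ0 ψ0 : ℂ) = 1) (h11 : (inner ℂ ψ1 ψ1 : ℂ) = 1)
    (h01 : (inner ℂ ψ0 ψ1 : ℂ) = 0)
    (ψ : Fin 8 → E)
    (hunit : ∀ L, ‖ψ L‖ = 1)
    (hψ0 : ψ 0 = ψ0) (hψ4 : ψ 4 = ψ1)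
    -- (i) each ψ(L) lies in the span of ψ₀ and ψ₁
    (hspan : ∀ L, ψ L ∈ Submodule.span ℂ ({ψ0, ψ1} : Set E))
    -- (ii) |⟪ψ₀, ψ(L)⟫| = |cos(Lπ/8)| and |⟪ψ₁, ψ(L)⟫| = |sin(Lπ/8)|
    (hcos : ∀ L : Fin 8,
      ‖(inner ℂ ψ0 (ψ L) : ℂ)‖ = |Real.cos ((L : ℕ) * Real.pi / 8)|)
    (hsin : ∀ L : Fin 8,
      ‖(inner ℂ ψ1 (ψ L) : ℂ)‖ = |Real.sin ((L : ℕ) * Real.pi / 8)|)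
    -- (iii) ⟪ψ(L+4 mod 8), ψ(L)⟫ = 0
    (horth : ∀ L : Fin 8, (inner ℂ (ψ (L + 4)) (ψ L) : ℂ) = 0)
    -- (iv) |⟪ψ(2), ψ(1)⟫| = cos(π/8) = |⟪ψ(2), ψ(3)⟫|
    (h21 : ‖(inner ℂ (ψ 2) (ψ 1) : ℂ)‖ = Real.cos (Real.pi / 8))
    (h23 : ‖(inner ℂ (ψ 2) (ψ 3) : ℂ)‖ = Real.cos (Real.pi / 8)) :
    ∃ φ : ℝ, ∀ L : Fin 8, ∃ c : ℂ, ‖c‖ = 1 ∧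
      ψ L = c • ((Real.cos ((L : ℕ) * Real.pi / 8) : ℂ) • ψ0 +
        (Complex.exp ((φ : ℂ) * Complex.I) * (Real.sin ((L : ℕ) * Real.pi / 8) : ℂ)) • ψ1) :=
  eight_states_form_general ψ0 ψ1 h00 h11 h01 ψ hspan hcos hsin horth h21 h23
end
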